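/- Let h be a Macaulay function of type a ≥ 1 with s = s_0(h) finite. Then Σ_{0 ≤ k < s} h(k) = C(a+s-1, s-1). In particular, if h has finite support, then Σ_{k ∈ ℕ} h(k) ≥ C(a+s-1, s-1). -/

import Mathlib

open scoped BigOperators

/-- The largest `m` with `C(m, i) ≤ α` (for `i ≥ 1`, `α ≥ 1` this is the leading
exponent of the `i`-binomial development of `α`). -/
noncomputable def lead (α i : ℕ) : ℕ := sSup {m : ℕ | Nat.choose m i ≤ α}

/-- `binUp i α = α^{<i>}`, defined through the `i`-binomial development of `α`:
if `α = C(m_i, i) + C(m_{i-1}, i-1) + ⋯ + C(m_j, j)` with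
`m_i > m_{i-1} > ⋯ > m_j ≥ j ≥ 1`, then
`binUp i α = C(m_i+1, i+1) + C(m_{i-1}+1, i) + ⋯ + C(m_j+1, j+1)`, and `binUp i 0 = 0`. -/
noncomputable def binUp : ℕ → ℕ → ℕ
  | 0, _ => 0
  | (i+1), α =>
    if α = 0 then 0
    else Nat.choose (lead α (i+1) + 1) (i+2) +
      binUp i (α - Nat.choose (lead α (i+1)) (i+1))

/-- `h : ℕ → ℕ` is a Macaulay function if `h 0 = 1` and `h (i+1) ≤ (h i)^{<i>}`
for every `i ≥ 1`. -/
def MacaulayFun (h : ℕ → ℕ) : Prop :=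
  h 0 = 1 ∧ ∀ i, 1 ≤ i → h (i+1) ≤ binUp i (h i)

/-- `s₀(h) = inf {n | h n < C(a+n-1, n)} ∈ ℕ ∪ {∞}` for a Macaulay function of
type `a = h 1`. -/
noncomputable def s0M (h : ℕ → ℕ) : ℕ∞ :=
  sInf {x : ℕ∞ | ∃ n : ℕ, x = (n : ℕ∞) ∧ h n < Nat.choose (h 1 + n - 1) n}

/-- `sup f = max {n | f n ≠ 0}` for a finitely supported `f : ℕ → ℕ`. -/
noncomputable def supN (f : ℕ → ℕ) : ℕ := sSup {n : ℕ | f n ≠ 0}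

/-- A character: a finitely supported `γ : ℤ → ℤ` with `∑ γ(n) = 0`. -/
def IsChar (γ : ℤ → ℤ) : Prop :=
  (Function.support γ).Finite ∧ ∑ᶠ n, γ n = 0

/-- `s₀(γ) = inf {n ≥ 0 | γ n ≠ -1}`. -/
noncomputable def s0C (γ : ℤ → ℤ) : ℤ := sInf {n : ℤ | 0 ≤ n ∧ γ n ≠ -1}

/-- A positive character: `γ(n) = 0` for `n < 0`, `γ(0) = -1` and `γ(n) ≥ 0`
for every `n ≥ s₀(γ)`. -/
def PosChar (γ : ℤ → ℤ) : Prop :=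
  IsChar γ ∧ (∀ n < 0, γ n = 0) ∧ γ 0 = -1 ∧ ∀ n : ℤ, s0C γ ≤ n → 0 ≤ γ n

/-- `sup γ = max {n | γ n ≠ 0}` for a finitely supported `γ : ℤ → ℤ`. -/
noncomputable def supZ (γ : ℤ → ℤ) : ℤ := sSup {n : ℤ | γ n ≠ 0}

/-- `IsDev α i j m` says that `α = C(m_i, i) + C(m_{i-1}, i-1) + ⋯ + C(m_j, j)`
with `m_i > m_{i-1} > ⋯ > m_j ≥ j ≥ 1` is the `i`-binomial development of `α`. -/
def IsDev (α i j : ℕ) (m : ℕ → ℕ) : Prop :=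
  1 ≤ j ∧ j ≤ i ∧ j ≤ m j ∧ (∀ k, j ≤ k → k < i → m k < m (k+1)) ∧
    α = ∑ k ∈ Finset.Icc j i, Nat.choose (m k) k

/-!
Below `s₀(h)` the lower bound `h k ≥ C(a+k-1, k)` from the definition of `s₀` meets Macaulay's
upper bound: `C(n, k)^{<k>} = C(n+1, k+1)`, so `h k = C(a+k-1, k)` forces
`h (k+1) ≤ C(a+k, k+1)`. Hence `h k = C(a+k-1, k)` for all `k < s`, and the hockey-stick
identity sums these to `C(a+s-1, s-1)`.
-/

open Finset

lemma Nat.choose_lt_choose_of_lt {m n k : ℕ} (hk : 0 < k) (hkn : k ≤ n + 1) (hnm : n < m) :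
    n.choose k < m.choose k := by
  obtain ⟨i, rfl⟩ := Nat.exists_eq_add_one.mpr hk
  calc n.choose (i + 1)
      < n.choose i + n.choose (i + 1) := Nat.lt_add_of_pos_left (Nat.choose_pos (by omega))
    _ = (n + 1).choose (i + 1) := (Nat.choose_succ_succ n i).symm
    _ ≤ m.choose (i + 1) := Nat.choose_le_choose _ hnm

lemma Finset.sum_le_finsum {α M : Type*} [AddCommMonoid M] [PartialOrder M]
    [CanonicallyOrderedAdd M] {f : α → M} (hf : (Function.support f).Finite) (s : Finset α) :
    ∑ i ∈ s, f i ≤ ∑ᶠ i, f i := by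
  classical
  rw [finsum_eq_sum_of_support_subset f (s := s ∪ hf.toFinset) (by simp)]
  exact sum_le_sum_of_subset subset_union_left

lemma lead_choose {n k : ℕ} (hk : 0 < k) (hkn : k ≤ n + 1) : lead (n.choose k) k = n := by
  have hset : {m : ℕ | m.choose k ≤ n.choose k} = Set.Iic n := by
    ext m
    simp only [Set.mem_ofPred_eq, Set.mem_Iic]
    exact ⟨fun hm => not_lt.mp fun hnm => (Nat.choose_lt_choose_of_lt hk hkn hnm).not_ge hm,
      Nat.choose_le_choose k⟩
  rw [lead, hset, csSup_Iic]

lemma binUp_zero (i : ℕ) : binUp i 0 = 0 := by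
  cases i <;> simp [binUp]

lemma binUp_choose {n k : ℕ} (hk : 0 < k) : binUp k (n.choose k) = (n + 1).choose (k + 1) := by
  obtain ⟨i, rfl⟩ := Nat.exists_eq_add_one.mpr hk
  by_cases hn : n < i + 1
  · rw [Nat.choose_eq_zero_of_lt hn, Nat.choose_eq_zero_of_lt (by omega), binUp_zero]
  · rw [binUp, if_neg (Nat.choose_pos (by omega)).ne', lead_choose hk (by omega), Nat.sub_self,
      binUp_zero, Nat.add_zero]

lemma sum_range_choose_add_sub_one (a t : ℕ) :
    ∑ k ∈ range (t + 1), (a + k - 1).choose k = (a + t).choose t := by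
  induction t with
  | zero => simp
  | succ t ih =>
    rw [sum_range_succ, ih, ← add_assoc, Nat.add_sub_cancel, Nat.choose_succ_succ (a + t) t]

lemma choose_le_of_lt_s0M {h : ℕ → ℕ} {k : ℕ} (hk : (k : ℕ∞) < s0M h) :
    (h 1 + k - 1).choose k ≤ h k := by
  by_contra! hlt
  exact hk.not_ge (sInf_le ⟨k, rfl, hlt⟩)

lemma one_le_s0M {h : ℕ → ℕ} (h0 : h 0 = 1) : 1 ≤ s0M h := by
  refine le_sInf ?_
  rintro _ ⟨n, rfl, hn⟩
  have hn0 : n ≠ 0 := by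
    rintro rfl
    simp [h0] at hn
  exact_mod_cast Nat.one_le_iff_ne_zero.mpr hn0

namespace MacaulayFun

variable {h : ℕ → ℕ}

lemma le_choose_succ (hM : MacaulayFun h) {k : ℕ} (hk : h k = (h 1 + k - 1).choose k) :
    h (k + 1) ≤ (h 1 + k).choose (k + 1) := by
  rcases Nat.eq_zero_or_pos k with rfl | hk0
  · simp
  · calc h (k + 1) ≤ binUp k (h k) := hM.2 k hk0
      _ = (h 1 + k - 1 + 1).choose (k + 1) := by rw [hk, binUp_choose hk0]
      _ = (h 1 + k).choose (k + 1) := by rw [Nat.sub_add_cancel (by omega)]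

lemma eq_choose_of_lt_s0M (hM : MacaulayFun h) {k : ℕ} (hk : (k : ℕ∞) < s0M h) :
    h k = (h 1 + k - 1).choose k := by
  induction k with
  | zero => simp [hM.1]
  | succ k ih =>
    have hk' : (k : ℕ∞) < s0M h := lt_of_le_of_lt (by exact_mod_cast k.le_succ) hk
    refine le_antisymm ?_ (choose_le_of_lt_s0M hk)
    simpa using hM.le_choose_succ (ih hk')

end MacaulayFun

theorem macaulay_sum_lower_bound_general (h : ℕ → ℕ) (a s : ℕ)
    (hM : MacaulayFun h) (ha : h 1 = a)
    (hs : s0M h = (s : ℕ∞)) :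
    (∑ k ∈ Finset.range s, h k = Nat.choose (a + s - 1) (s - 1)) ∧
    ((Function.support h).Finite →
      Nat.choose (a + s - 1) (s - 1) ≤ ∑ᶠ k : ℕ, h k) := by
  obtain ⟨t, rfl⟩ : ∃ t, s = t + 1 :=
    Nat.exists_eq_add_of_le' (by exact_mod_cast hs ▸ one_le_s0M hM.1)
  have hsum : ∑ k ∈ range (t + 1), h k = (a + t).choose t := by
    rw [← sum_range_choose_add_sub_one]
    refine sum_congr rfl fun k hk => ?_
    rw [hM.eq_choose_of_lt_s0M (hs ▸ by exact_mod_cast mem_range.mp hk), ha]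
  simp only [Nat.add_sub_cancel, ← add_assoc]
  exact ⟨hsum, fun hfin => hsum ▸ sum_le_finsum hfin _⟩

/-- Remark 2.14: for a Macaulay function of type `a ≥ 1`
with `s = s₀(h)` finite, `∑_{0 ≤ k < s} h(k) = C(a+s-1, s-1)`; in particular,
if `h` has finite support, `∑_k h(k) ≥ C(a+s-1, s-1)`. -/
theorem macaulay_sum_lower_bound (h : ℕ → ℕ) (a s : ℕ)
    (hM : MacaulayFun h) (ha : h 1 = a) (ha1 : 1 ≤ a)
    (hs : s0M h = (s : ℕ∞)) :
    (∑ k ∈ Finset.range s, h k = Nat.choose (a + s - 1) (s - 1)) ∧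
    ((Function.support h).Finite →
      Nat.choose (a + s - 1) (s - 1) ≤ ∑ᶠ k : ℕ, h k) :=
  macaulay_sum_lower_bound_general h a s hM ha hs
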